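/- Let d_A, d_B, d_E be positive natural numbers and V an isometry from ℂ^{d_A} to ℂ^{d_B} ⊗ ℂ^{d_E}, with associated channel Φ(ρ) = Tr_E(V ρ Vᴴ) and complementary channel Φ̂(ρ) = Tr_B(V ρ Vᴴ). Then for every Borel probability measure μ on the set S_{d_A} of states on ℂ^{d_A}, with barycenter ρ̄(μ) = ∫ ρ μ(dρ), the identity χ(μ) + I(B:E)_{V ρ̄(μ) Vᴴ} = χ(Φ(μ)) + χ(Φ̂(μ)) + ∫ I(B:E)_{V ρ Vᴴ} μ(dρ) holds, where χ(μ) = H(ρ̄(μ)) − ∫ H(ρ) μ(dρ), χ(Φ(μ)) = H(Φ(ρ̄(μ))) − ∫ H(Φ(ρ)) μ(dρ), and χ(Φ̂(μ)) = H(Φ̂(ρ̄(μ))) − ∫ H(Φ̂(ρ)) μ(dρ). -/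

import Mathlib

open MeasureTheory ComplexOrder Matrix

noncomputable section

instance matMS {m n : Type*} : MeasurableSpace (Matrix m n ℂ) :=
  inferInstanceAs (MeasurableSpace (m → n → ℂ))

instance matBS {m n : Type*} [Countable m] [Countable n] : BorelSpace (Matrix m n ℂ) :=
  inferInstanceAs (BorelSpace (m → n → ℂ))

/-- The set of quantum states (density matrices). -/
def stateSet (n : ℕ) : Set (Matrix (Fin n) (Fin n) ℂ) :=
  {ρ | ρ.PosSemidef ∧ ρ.trace = 1}

/-- Von Neumann entropy: sum of `negMulLog` over eigenvalues. -/
def vnEntropy {ι : Type*} [Fintype ι] [DecidableEq ι] (ρ : Matrix ι ι ℂ) : ℝ :=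
  if h : ρ.IsHermitian then ∑ i, Real.negMulLog (h.eigenvalues i) else 0

/-- Partial trace over the second (environment) factor. -/
def ptraceE {dB dE : ℕ} (M : Matrix (Fin dB × Fin dE) (Fin dB × Fin dE) ℂ) :
    Matrix (Fin dB) (Fin dB) ℂ :=
  Matrix.of fun b b' => ∑ e, M (b, e) (b', e)

/-- Partial trace over the first factor. -/
def ptraceB {dB dE : ℕ} (M : Matrix (Fin dB × Fin dE) (Fin dB × Fin dE) ℂ) :
    Matrix (Fin dE) (Fin dE) ℂ :=
  Matrix.of fun e e' => ∑ b, M (b, e) (b, e')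

/-- Quantum mutual information I(B:E) of a bipartite state. -/
def qmi {dB dE : ℕ} (ω : Matrix (Fin dB × Fin dE) (Fin dB × Fin dE) ℂ) : ℝ :=
  vnEntropy (ptraceE ω) + vnEntropy (ptraceB ω) - vnEntropy ω

/-- The channel `ρ ↦ Tr_E (V ρ V†)` associated with a Stinespring isometry `V`. -/
def chanPhi {dA dB dE : ℕ} (V : Matrix (Fin dB × Fin dE) (Fin dA) ℂ)
    (ρ : Matrix (Fin dA) (Fin dA) ℂ) : Matrix (Fin dB) (Fin dB) ℂ :=
  ptraceE (V * ρ * Vᴴ)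

/-- The complementary channel `ρ ↦ Tr_B (V ρ V†)`. -/
def chanPhiHat {dA dB dE : ℕ} (V : Matrix (Fin dB × Fin dE) (Fin dA) ℂ)
    (ρ : Matrix (Fin dA) (Fin dA) ℂ) : Matrix (Fin dE) (Fin dE) ℂ :=
  ptraceB (V * ρ * Vᴴ)

/-- Barycenter (average state) of a generalized ensemble. -/
def barycenter {n : ℕ} (μ : ProbabilityMeasure (stateSet n)) :
    Matrix (Fin n) (Fin n) ℂ :=
  Matrix.of fun i j => ∫ ρ : stateSet n, ρ.1 i j ∂(μ : Measure (stateSet n))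

/-- Output χ-quantity of a generalized ensemble under a map `Φ`. -/
def gChiOut {n d : ℕ} (Φ : Matrix (Fin n) (Fin n) ℂ → Matrix (Fin d) (Fin d) ℂ)
    (μ : ProbabilityMeasure (stateSet n)) : ℝ :=
  vnEntropy (Φ (barycenter μ)) -
    ∫ ρ : stateSet n, vnEntropy (Φ ρ.1) ∂(μ : Measure (stateSet n))

/-- χ-quantity of a generalized ensemble. -/
def gChi {n : ℕ} (μ : ProbabilityMeasure (stateSet n)) : ℝ :=
  vnEntropy (barycenter μ) -
    ∫ ρ : stateSet n, vnEntropy ρ.1 ∂(μ : Measure (stateSet n))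

/-- Holevo χ-quantity of a finite ensemble. -/
def finChi {d m : ℕ} (π : Fin m → ℝ) (σ : Fin m → Matrix (Fin d) (Fin d) ℂ) : ℝ :=
  vnEntropy (∑ i, π i • σ i) - ∑ i, π i * vnEntropy (σ i)

/-- The set of pure states (rank-one projections) viewed inside the state space. -/
def pureStates (n : ℕ) : Set (stateSet n) := {ρ | ρ.1 * ρ.1 = ρ.1}

end

open scoped ENNReal

/-!
Since `V` is an isometry, `V ρ Vᴴ` has the same nonzero spectrum as `ρ`, so
`I(B:E)_{V ρ Vᴴ} = H(Φ ρ) + H(Φ̂ ρ) - H(ρ)` for every `ρ`. Evaluating this at `ρ̄(μ)` and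
integrating it against `μ` gives the identity by linearity of the integral; the three entropy
integrals are finite because entropy is continuous and bounded by the dimension on states, and
`Φ`, `Φ̂` map states continuously to states.
-/

open Polynomial Real

section Entropy
variable {ι κ : Type*} [Fintype ι] [DecidableEq ι] [Fintype κ] [DecidableEq κ]

lemma vnEntropy_eq_sum_roots_charpoly {A : Matrix ι ι ℂ} (hA : A.IsHermitian) :
    vnEntropy A = (A.charpoly.roots.map fun z : ℂ => negMulLog z.re).sum := by
  rw [hA.roots_charpoly_eq_eigenvalues, Multiset.map_map, vnEntropy, dif_pos hA]
  rfl

lemma sum_negMulLog_roots_X_pow_mul {p : ℂ[X]} (hp : p ≠ 0) (k : ℕ) :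
    ((X ^ k * p).roots.map fun z : ℂ => negMulLog z.re).sum
      = (p.roots.map fun z : ℂ => negMulLog z.re).sum := by
  simp [roots_mul (mul_ne_zero (pow_ne_zero k X_ne_zero) hp), Multiset.nsmul_singleton]

/-- `X ^ |κ| * χ(V (ρ Vᴴ)) = X ^ |ι| * χ((ρ Vᴴ) V)`, so `V ρ Vᴴ` and `ρ` differ only in zero
eigenvalues. If `ρ` is not Hermitian, neither is `V ρ Vᴴ`, and both entropies are the junk `0`. -/
lemma vnEntropy_conj_isometry {V : Matrix ι κ ℂ} (hV : Vᴴ * V = 1) (ρ : Matrix κ κ ℂ) :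
    vnEntropy (V * ρ * Vᴴ) = vnEntropy ρ := by
  by_cases hρ : ρ.IsHermitian
  · have hcp := charpoly_mul_comm' V (ρ * Vᴴ)
    rw [Matrix.mul_assoc ρ, hV, Matrix.mul_one, ← Matrix.mul_assoc] at hcp
    rw [vnEntropy_eq_sum_roots_charpoly (isHermitian_mul_mul_conjTranspose V hρ),
      vnEntropy_eq_sum_roots_charpoly hρ,
      ← sum_negMulLog_roots_X_pow_mul (charpoly_monic _).ne_zero (Fintype.card κ), hcp,
      sum_negMulLog_roots_X_pow_mul (charpoly_monic _).ne_zero]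
  · have hM : ¬ (V * ρ * Vᴴ).IsHermitian := fun hM => hρ <| by
      have h := isHermitian_conjTranspose_mul_mul V hM
      rwa [Matrix.mul_assoc, Matrix.mul_assoc, hV, Matrix.mul_one, ← Matrix.mul_assoc, hV,
        Matrix.one_mul] at h
    rw [vnEntropy, vnEntropy, dif_neg hρ, dif_neg hM]

lemma vnEntropy_eq_re_trace_cfc {A : Matrix ι ι ℂ} (hA : A.IsHermitian) :
    vnEntropy A = (cfc negMulLog A).trace.re := by
  rw [hA.cfc_eq, IsHermitian.cfc, Unitary.conjStarAlgAut_apply, trace_mul_cycle,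
    Unitary.coe_star_mul_self, Matrix.one_mul, trace_diagonal, vnEntropy, dif_pos hA]
  simp

end Entropy

section States
variable {ι : Type*} [Fintype ι] [DecidableEq ι] {ρ : Matrix ι ι ℂ}

lemma sum_eigenvalues_of_trace_eq_one (hρ : ρ.IsHermitian) (htr : ρ.trace = 1) :
    ∑ i, hρ.eigenvalues i = 1 := by
  simpa using congrArg Complex.re (hρ.trace_eq_sum_eigenvalues.symm.trans htr)

lemma eigenvalues_mem_Icc_of_trace_eq_one (hρ : ρ.PosSemidef) (htr : ρ.trace = 1) (i : ι) :
    hρ.1.eigenvalues i ∈ Set.Icc 0 1 :=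
  ⟨hρ.eigenvalues_nonneg i, sum_eigenvalues_of_trace_eq_one hρ.1 htr ▸
    Finset.single_le_sum (fun j _ => hρ.eigenvalues_nonneg j) (Finset.mem_univ i)⟩

lemma spectrum_subset_Icc_of_trace_eq_one (hρ : ρ.PosSemidef) (htr : ρ.trace = 1) :
    spectrum ℝ ρ ⊆ Set.Icc 0 1 := by
  rw [hρ.1.spectrum_real_eq_range_eigenvalues]
  rintro _ ⟨i, rfl⟩
  exact eigenvalues_mem_Icc_of_trace_eq_one hρ htr i

lemma vnEntropy_nonneg (hρ : ρ.PosSemidef) (htr : ρ.trace = 1) : 0 ≤ vnEntropy ρ := by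
  rw [vnEntropy, dif_pos hρ.1]
  exact Finset.sum_nonneg fun i _ => negMulLog_nonneg
    (eigenvalues_mem_Icc_of_trace_eq_one hρ htr i).1
    (eigenvalues_mem_Icc_of_trace_eq_one hρ htr i).2

lemma vnEntropy_le_card (hρ : ρ.PosSemidef) (htr : ρ.trace = 1) :
    vnEntropy ρ ≤ Fintype.card ι := by
  rw [vnEntropy, dif_pos hρ.1, Fintype.card_eq_sum_ones, Nat.cast_sum, Nat.cast_one]
  refine Finset.sum_le_sum fun i _ => ?_
  have hi := eigenvalues_mem_Icc_of_trace_eq_one hρ htr i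
  linarith [negMulLog_le_one_sub_self hi.1, hi.1]

variable (ι) in
open scoped Matrix.Norms.L2Operator in
/-- Entropy is `re ∘ trace ∘ cfc negMulLog`, continuous on matrices with spectrum in the compact
`[0, 1]`. The L² operator norm only makes matrices a C⋆-algebra; its topology is the usual one. -/
lemma continuousOn_vnEntropy :
    ContinuousOn vnEntropy {ρ : Matrix ι ι ℂ | ρ.PosSemidef ∧ ρ.trace = 1} := by
  have hcfc := continuousOn_cfc (Matrix ι ι ℂ) isCompact_Icc negMulLog (s := Set.Icc (0 : ℝ) 1)
  refine ((Complex.continuous_re.comp continuous_id.matrix_trace).comp_continuousOn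
    (hcfc.mono fun ρ hρ => ⟨hρ.1.1, spectrum_subset_Icc_of_trace_eq_one hρ.1 hρ.2⟩)).congr
    fun ρ hρ => vnEntropy_eq_re_trace_cfc hρ.1.1

lemma integrable_vnEntropy_comp {X : Type*} [TopologicalSpace X] [MeasurableSpace X]
    [OpensMeasurableSpace X] (μ : Measure X) [IsFiniteMeasure μ] {f : X → Matrix ι ι ℂ}
    (hf : Continuous f) (hfs : ∀ x, (f x).PosSemidef ∧ (f x).trace = 1) :
    Integrable (fun x => vnEntropy (f x)) μ :=
  .of_bound ((continuousOn_vnEntropy ι).comp_continuous hf hfs).aestronglyMeasurable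
    (Fintype.card ι) <| ae_of_all _ fun x => by
      rw [Real.norm_of_nonneg (vnEntropy_nonneg (hfs x).1 (hfs x).2)]
      exact vnEntropy_le_card (hfs x).1 (hfs x).2

end States

section PartialTrace
variable {dB dE : ℕ} (M : Matrix (Fin dB × Fin dE) (Fin dB × Fin dE) ℂ)

lemma ptraceE_eq_sum_submatrix : ptraceE M = ∑ e, M.submatrix (·, e) (·, e) := by
  ext
  simp [ptraceE, Matrix.sum_apply]

lemma ptraceB_eq_sum_submatrix : ptraceB M = ∑ b, M.submatrix (b, ·) (b, ·) := by
  ext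
  simp [ptraceB, Matrix.sum_apply]

lemma trace_ptraceE : (ptraceE M).trace = M.trace := by
  simp [Matrix.trace, ptraceE, Fintype.sum_prod_type]

lemma trace_ptraceB : (ptraceB M).trace = M.trace := by
  simp [Matrix.trace, ptraceB, Fintype.sum_prod_type, Finset.sum_comm (γ := Fin dB)]

variable {M} in
lemma Matrix.PosSemidef.ptraceE (hM : M.PosSemidef) : (ptraceE M).PosSemidef := by
  rw [ptraceE_eq_sum_submatrix]
  exact posSemidef_sum _ fun e _ => hM.submatrix _

variable {M} in
lemma Matrix.PosSemidef.ptraceB (hM : M.PosSemidef) : (ptraceB M).PosSemidef := by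
  rw [ptraceB_eq_sum_submatrix]
  exact posSemidef_sum _ fun b _ => hM.submatrix _

lemma continuous_ptraceE : Continuous (ptraceE (dB := dB) (dE := dE)) := by
  simp_rw [funext ptraceE_eq_sum_submatrix]
  exact continuous_finsetSum _ fun e _ => continuous_id.matrix_submatrix _ _

lemma continuous_ptraceB : Continuous (ptraceB (dB := dB) (dE := dE)) := by
  simp_rw [funext ptraceB_eq_sum_submatrix]
  exact continuous_finsetSum _ fun b _ => continuous_id.matrix_submatrix _ _

end PartialTrace

lemma trace_conj_isometry {ι κ : Type*} [Fintype ι] [Fintype κ] [DecidableEq κ]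
    {V : Matrix ι κ ℂ} (hV : Vᴴ * V = 1) (ρ : Matrix κ κ ℂ) :
    (V * ρ * Vᴴ).trace = ρ.trace := by
  rw [trace_mul_cycle, hV, Matrix.one_mul]

section Channel
variable {dA dB dE : ℕ} {V : Matrix (Fin dB × Fin dE) (Fin dA) ℂ}

lemma chanPhi_mem_stateSet (hV : Vᴴ * V = 1) {ρ : Matrix (Fin dA) (Fin dA) ℂ}
    (hρ : ρ ∈ stateSet dA) : chanPhi V ρ ∈ stateSet dB :=
  ⟨(hρ.1.mul_mul_conjTranspose_same V).ptraceE,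
    by rw [chanPhi, trace_ptraceE, trace_conj_isometry hV, hρ.2]⟩

lemma chanPhiHat_mem_stateSet (hV : Vᴴ * V = 1) {ρ : Matrix (Fin dA) (Fin dA) ℂ}
    (hρ : ρ ∈ stateSet dA) : chanPhiHat V ρ ∈ stateSet dE :=
  ⟨(hρ.1.mul_mul_conjTranspose_same V).ptraceB,
    by rw [chanPhiHat, trace_ptraceB, trace_conj_isometry hV, hρ.2]⟩

variable (V) in
lemma continuous_chanPhi : Continuous (chanPhi V) :=
  continuous_ptraceE.comp ((continuous_const.matrix_mul continuous_id).matrix_mul continuous_const)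

variable (V) in
lemma continuous_chanPhiHat : Continuous (chanPhiHat V) :=
  continuous_ptraceB.comp ((continuous_const.matrix_mul continuous_id).matrix_mul continuous_const)

lemma qmi_conj_isometry (hV : Vᴴ * V = 1) (ρ : Matrix (Fin dA) (Fin dA) ℂ) :
    qmi (V * ρ * Vᴴ) = vnEntropy (chanPhi V ρ) + vnEntropy (chanPhiHat V ρ) - vnEntropy ρ := by
  rw [qmi, vnEntropy_conj_isometry hV]
  rfl

end Channel

theorem gChi_add_qmi_identity_general
    (dA dB dE : ℕ)
    (V : Matrix (Fin dB × Fin dE) (Fin dA) ℂ) (hV : Vᴴ * V = 1)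
    (μ : ProbabilityMeasure (stateSet dA)) :
    gChi μ + qmi (V * barycenter μ * Vᴴ)
      = gChiOut (chanPhi V) μ + gChiOut (chanPhiHat V) μ
        + ∫ ρ : stateSet dA, qmi (V * ρ.1 * Vᴴ) ∂(μ : Measure (stateSet dA)) := by
  have hA : Integrable (fun ρ : stateSet dA => vnEntropy ρ.1) μ :=
    integrable_vnEntropy_comp _ continuous_subtype_val fun ρ => ρ.2
  have hB : Integrable (fun ρ : stateSet dA => vnEntropy (chanPhi V ρ.1)) μ :=
    integrable_vnEntropy_comp _ ((continuous_chanPhi V).comp continuous_subtype_val)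
      fun ρ => chanPhi_mem_stateSet hV ρ.2
  have hE : Integrable (fun ρ : stateSet dA => vnEntropy (chanPhiHat V ρ.1)) μ :=
    integrable_vnEntropy_comp _ ((continuous_chanPhiHat V).comp continuous_subtype_val)
      fun ρ => chanPhiHat_mem_stateSet hV ρ.2
  simp only [qmi_conj_isometry hV]
  rw [integral_sub (hB.fun_add hE) hA, integral_add hB hE, gChi, gChiOut, gChiOut]
  ring

/-- The basic identity
`χ(μ) + I(B:E)_{V ρ̄(μ) Vᴴ} = χ(Φ(μ)) + χ(Φ̂(μ)) + ∫ I(B:E)_{V ρ Vᴴ} μ(dρ)`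
for generalized ensembles. -/
theorem gChi_add_qmi_identity
    (dA dB dE : ℕ) (hdA : 0 < dA) (hdB : 0 < dB) (hdE : 0 < dE)
    (V : Matrix (Fin dB × Fin dE) (Fin dA) ℂ) (hV : Vᴴ * V = 1)
    (μ : ProbabilityMeasure (stateSet dA)) :
    gChi μ + qmi (V * barycenter μ * Vᴴ)
      = gChiOut (chanPhi V) μ + gChiOut (chanPhiHat V) μ
        + ∫ ρ : stateSet dA, qmi (V * ρ.1 * Vᴴ) ∂(μ : Measure (stateSet dA)) :=
  gChi_add_qmi_identity_general dA dB dE V hV μ
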